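/- There exists a constant C > 0 such that for all x > 0, K_0(x) ≥ C · e^{−x} / (1 + √x). -/

import Mathlib

open MeasureTheory

/-- The modified Bessel function of the second kind. -/
noncomputable def besselK (ν x : ℝ) : ℝ :=
  ∫ t in Set.Ioi (0:ℝ), Real.exp (-x * Real.cosh t) * Real.cosh (ν * t)

/-!
Near `t = 0` we have `cosh t ≤ 1 + t²`, so on the window `0 < t ≤ 1 / (1 + √x)`, where `x t² ≤ 1`,
the integrand `exp (-x cosh t)` of `K₀(x)` is at least `e⁻¹ e⁻ˣ`. The window has length
`1 / (1 + √x)`, which gives the bound with `C = e⁻¹`.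
-/

open Real Set

lemma Real.cosh_le_one_add_sq {t : ℝ} (ht : t ^ 2 ≤ 2) : cosh t ≤ 1 + t ^ 2 := by
  have hexp := exp_bound' (x := t ^ 2 / 2) (by positivity) (by linarith) one_pos
  norm_num at hexp
  linarith [cosh_le_exp_half_sq t]

lemma Real.self_le_cosh {t : ℝ} (ht : 0 ≤ t) : t ≤ cosh t :=
  (self_le_sinh_iff.2 ht).trans (sinh_lt_cosh t).le

lemma besselK_zero_eq (x : ℝ) : besselK 0 x = ∫ t in Ioi 0, exp (-x * cosh t) := by
  simp [besselK]

lemma integrableOn_exp_neg_mul_cosh {x : ℝ} (hx : 0 < x) :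
    IntegrableOn (fun t => exp (-x * cosh t)) (Ioi 0) := by
  refine (exp_neg_integrableOn_Ioi 0 hx).mono' (by fun_prop) ?_
  filter_upwards [ae_restrict_mem measurableSet_Ioi] with t ht
  rw [norm_of_nonneg (exp_pos _).le, exp_le_exp]
  nlinarith [self_le_cosh ht.le]

lemma mul_sub_le_setIntegral_Ioi {f : ℝ → ℝ} {a b c : ℝ} (hab : a ≤ b)
    (hf : IntegrableOn f (Ioi a)) (hf_nonneg : ∀ t ∈ Ioi a, 0 ≤ f t)
    (hc : ∀ t ∈ Ioc a b, c ≤ f t) :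
    c * (b - a) ≤ ∫ t in Ioi a, f t := by
  calc c * (b - a) ≤ ∫ t in Ioc a b, f t := by
        have := setIntegral_ge_of_const_le_real measurableSet_Ioc (by simp) hc
          (hf.mono_set Ioc_subset_Ioi_self)
        rwa [volume_real_Ioc_of_le hab] at this
    _ ≤ ∫ t in Ioi a, f t :=
        setIntegral_mono_set hf (ae_restrict_of_forall_mem measurableSet_Ioi hf_nonneg)
          Ioc_subset_Ioi_self.eventuallyLE

lemma exp_neg_one_mul_exp_neg_le_exp_neg_mul_cosh {x t : ℝ} (hx : 0 ≤ x) (ht : t ^ 2 ≤ 2)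
    (hxt : x * t ^ 2 ≤ 1) : exp (-1) * exp (-x) ≤ exp (-x * cosh t) := by
  rw [← exp_add, exp_le_exp]
  nlinarith [cosh_le_one_add_sq ht]

theorem besselK_zero_lower_bound :
    ∃ C > 0, ∀ x > 0,
      C * Real.exp (-x) / (1 + Real.sqrt x) ≤ besselK 0 x := by
  refine ⟨exp (-1), exp_pos _, fun x hx => ?_⟩
  obtain ⟨L, hL_def⟩ : ∃ L, L = 1 / (1 + √x) := ⟨_, rfl⟩
  have hsqrt := sqrt_nonneg x
  have hL : L * (1 + √x) = 1 := by rw [hL_def]; field_simp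
  have hL_nonneg : 0 ≤ L := by rw [hL_def]; positivity
  calc exp (-1) * exp (-x) / (1 + √x) = exp (-1) * exp (-x) * (L - 0) := by rw [hL_def]; ring
    _ ≤ besselK 0 x := by
      rw [besselK_zero_eq]
      refine mul_sub_le_setIntegral_Ioi hL_nonneg (integrableOn_exp_neg_mul_cosh hx)
        (fun t _ => (exp_pos _).le) fun t ⟨_, htL⟩ => ?_
      have ht_le_one : t ≤ 1 := htL.trans (by nlinarith)
      have ht_sqrt : t * √x ≤ 1 := by nlinarith
      apply exp_neg_one_mul_exp_neg_le_exp_neg_mul_cosh hx.le (by nlinarith)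
      calc x * t ^ 2 = (t * √x) ^ 2 := by rw [mul_pow, sq_sqrt hx.le]; ring
        _ ≤ 1 := pow_le_one₀ (by positivity) ht_sqrt
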